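/- Let f be a Stieltjes function f(z) = ∫₀^∞ dμ(t)/(t+z) and A a Hermitian positive definite matrix with smallest eigenvalue λ_min. Then for all matrices E, Z with ‖E‖_F = ‖Z‖_F = 1, the Frobenius norm of the second-order Fréchet derivative L_f^{(2)}(A, E, Z) = ∫₀^∞ [R_t E R_t Z R_t + R_t Z R_t E R_t] dμ(t), with R_t = (A+tI)^{-1}, is bounded above by 2∫₀^∞ dμ(t)/(λ_min+t)³ = |f''(λ_min)|. -/

import Mathlib

open Matrix MeasureTheory
open scoped ComplexOrder

attribute [local instance] Matrix.frobeniusNormedAddCommGroup Matrix.frobeniusNormedRing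
  Matrix.frobeniusNormedAlgebra

/-!
Write `R_t = (A + tI)⁻¹`. Since `A + tI - (λ_min + t)I` is positive semidefinite, Cauchy–Schwarz
gives `(λ_min + t)‖v‖ ≤ ‖(A + tI)v‖`, hence `‖R_t v‖ ≤ (λ_min + t)⁻¹‖v‖` for every vector `v`.
Applied column by column (and, through the conjugate transpose, row by row) this bounds
multiplication by `R_t` on either side in Frobenius norm by `(λ_min + t)⁻¹`. With
submultiplicativity of the Frobenius norm each of the two summands of the integrand has norm at
most `(λ_min + t)⁻³`, and integrating this pointwise bound gives the claim.
-/

open WithLp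

theorem norm_mul_mul_mul_mul_le {α : Type*} [NonUnitalSeminormedRing α] {R : α} {c : ℝ}
    (hc : 0 ≤ c) (hleft : ∀ M, ‖R * M‖ ≤ c * ‖M‖) (hright : ∀ M, ‖M * R‖ ≤ c * ‖M‖)
    (X Y : α) : ‖R * X * R * Y * R‖ ≤ c ^ 3 * (‖X‖ * ‖Y‖) :=
  calc ‖R * X * R * Y * R‖ ≤ c * ‖R * X * R * Y‖ := hright _
    _ ≤ c * (‖R * X * R‖ * ‖Y‖) := by gcongr; exact norm_mul_le _ _
    _ ≤ c * (c * (c * ‖X‖) * ‖Y‖) := by gcongr; exact (hright _).trans (by gcongr; exact hleft X)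
    _ = c ^ 3 * (‖X‖ * ‖Y‖) := by ring

namespace Matrix

variable {𝕜 : Type*} [RCLike 𝕜] {ι κ ν : Type*} [Fintype ι] [Fintype κ] [Fintype ν]

theorem frobenius_norm_sq_eq_sum_norm_sq_col (M : Matrix ι κ 𝕜) :
    ‖M‖ ^ 2 = ∑ j, ‖toLp 2 (Mᵀ j)‖ ^ 2 := by
  simp_rw [EuclideanSpace.norm_sq_eq, frobenius_norm_def, ← Real.sqrt_eq_rpow]
  rw [Real.sq_sqrt (by positivity), Finset.sum_comm]
  simp

theorem frobenius_norm_mul_le_of_norm_mulVec_le {B : Matrix ν ι 𝕜} {c : ℝ} (hc : 0 ≤ c)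
    (hB : ∀ v, ‖toLp 2 (B *ᵥ v)‖ ≤ c * ‖toLp 2 v‖) (M : Matrix ι κ 𝕜) :
    ‖B * M‖ ≤ c * ‖M‖ := by
  refine pow_le_pow_iff_left₀ (norm_nonneg _) (by positivity) two_ne_zero |>.1 ?_
  rw [mul_pow, frobenius_norm_sq_eq_sum_norm_sq_col, frobenius_norm_sq_eq_sum_norm_sq_col,
    Finset.mul_sum]
  refine Finset.sum_le_sum fun j _ => ?_
  rw [← mul_pow, transpose_mul, mul_apply_eq_vecMul, vecMul_transpose]
  exact pow_le_pow_left₀ (norm_nonneg _) (hB (Mᵀ j)) 2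

theorem frobenius_norm_mul_le_of_norm_conjTranspose_mulVec_le {B : Matrix κ ν 𝕜} {c : ℝ}
    (hc : 0 ≤ c) (hB : ∀ v, ‖toLp 2 (Bᴴ *ᵥ v)‖ ≤ c * ‖toLp 2 v‖) (M : Matrix ι κ 𝕜) :
    ‖M * B‖ ≤ c * ‖M‖ := by
  rw [← frobenius_norm_conjTranspose, conjTranspose_mul, ← frobenius_norm_conjTranspose M]
  exact frobenius_norm_mul_le_of_norm_mulVec_le hc hB Mᴴ

variable [DecidableEq ι] {A : Matrix ι ι 𝕜}

theorem IsHermitian.posSemidef_sub_smul_one (hA : A.IsHermitian) {c : ℝ}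
    (hc : ∀ i, c ≤ hA.eigenvalues i) : (A - (c : 𝕜) • 1).PosSemidef := by
  have hsub : (A - (c : 𝕜) • 1).IsHermitian :=
    hA.sub (by simp [IsHermitian, conjTranspose_smul])
  refine posSemidef_iff_isHermitian_and_spectrum_nonneg.2 ⟨hsub, ?_⟩
  rw [← Algebra.algebraMap_eq_smul_one, ← spectrum.sub_singleton_eq, hA.spectrum_eq_image_range]
  rintro _ ⟨_, ⟨_, ⟨i, rfl⟩, rfl⟩, _, rfl, rfl⟩
  change 0 ≤ (hA.eigenvalues i : 𝕜) - c
  rw [← RCLike.ofReal_sub, RCLike.ofReal_nonneg, sub_nonneg]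
  exact hc i

theorem PosSemidef.mul_norm_le_norm_mulVec {B : Matrix ι ι 𝕜} {m : ℝ}
    (hB : (B - (m : 𝕜) • 1).PosSemidef) (v : ι → 𝕜) :
    m * ‖toLp 2 v‖ ≤ ‖toLp 2 (B *ᵥ v)‖ := by
  have hform : m * ‖toLp 2 v‖ ^ 2 ≤ RCLike.re (inner 𝕜 (toLp 2 v) (toLp 2 (B *ᵥ v))) := by
    have h := hB.re_dotProduct_nonneg v
    rw [sub_mulVec, smul_mulVec, one_mulVec, dotProduct_sub, dotProduct_smul, map_sub,
      smul_eq_mul, RCLike.re_ofReal_mul, sub_nonneg] at h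
    rwa [@norm_sq_eq_re_inner 𝕜, EuclideanSpace.inner_toLp_toLp, EuclideanSpace.inner_toLp_toLp,
      dotProduct_comm, dotProduct_comm (B *ᵥ v)]
  have hcs : m * ‖toLp 2 v‖ * ‖toLp 2 v‖ ≤ ‖toLp 2 (B *ᵥ v)‖ * ‖toLp 2 v‖ := by
    nlinarith [re_inner_le_norm (𝕜 := 𝕜) (toLp 2 v) (toLp 2 (B *ᵥ v))]
  rcases (norm_nonneg (toLp 2 v)).eq_or_lt with hzero | hpos
  · rw [← hzero, mul_zero]
    exact norm_nonneg _
  · exact le_of_mul_le_mul_right hcs hpos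

theorem norm_inv_mulVec_le {B : Matrix ι ι 𝕜} {m : ℝ} (hm : 0 < m)
    (hB : ∀ v, m * ‖toLp 2 v‖ ≤ ‖toLp 2 (B *ᵥ v)‖) (v : ι → 𝕜) :
    ‖toLp 2 (B⁻¹ *ᵥ v)‖ ≤ m⁻¹ * ‖toLp 2 v‖ := by
  have hinj : Function.Injective B.mulVec := by
    intro x y hxy
    have h := hB (x - y)
    rw [mulVec_sub, hxy, sub_self, toLp_zero, norm_zero] at h
    have hzero : ‖toLp 2 (x - y)‖ = 0 :=
      le_antisymm (nonpos_of_mul_nonpos_right h hm) (norm_nonneg _)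
    simpa [sub_eq_zero] using hzero
  have hdet : IsUnit B.det := (isUnit_iff_isUnit_det B).1 (mulVec_injective_iff_isUnit.1 hinj)
  rw [le_inv_mul_iff₀ hm]
  simpa [mulVec_mulVec, mul_nonsing_inv _ hdet] using hB (B⁻¹ *ᵥ v)

theorem IsHermitian.norm_inv_add_smul_one_mulVec_le (hA : A.IsHermitian) {c t : ℝ}
    (hc : ∀ i, c ≤ hA.eigenvalues i) (hct : 0 < c + t) (v : ι → 𝕜) :
    ‖toLp 2 ((A + (t : 𝕜) • 1)⁻¹ *ᵥ v)‖ ≤ (c + t)⁻¹ * ‖toLp 2 v‖ := by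
  refine norm_inv_mulVec_le hct (fun w => PosSemidef.mul_norm_le_norm_mulVec ?_ w) v
  convert hA.posSemidef_sub_smul_one hc using 1
  rw [RCLike.ofReal_add, add_smul]
  abel

theorem IsHermitian.frobenius_norm_inv_add_smul_one_mul_le (hA : A.IsHermitian) {c t : ℝ}
    (hc : ∀ i, c ≤ hA.eigenvalues i) (hct : 0 < c + t) (M : Matrix ι κ 𝕜) :
    ‖(A + (t : 𝕜) • 1)⁻¹ * M‖ ≤ (c + t)⁻¹ * ‖M‖ :=
  frobenius_norm_mul_le_of_norm_mulVec_le (inv_nonneg.2 hct.le)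
    (hA.norm_inv_add_smul_one_mulVec_le hc hct) M

theorem IsHermitian.frobenius_norm_mul_inv_add_smul_one_le (hA : A.IsHermitian) {c t : ℝ}
    (hc : ∀ i, c ≤ hA.eigenvalues i) (hct : 0 < c + t) (M : Matrix κ ι 𝕜) :
    ‖M * (A + (t : 𝕜) • 1)⁻¹‖ ≤ (c + t)⁻¹ * ‖M‖ := by
  have hB : (A + (t : 𝕜) • 1).IsHermitian :=
    hA.add (by simp [IsHermitian, conjTranspose_smul])
  refine frobenius_norm_mul_le_of_norm_conjTranspose_mulVec_le (inv_nonneg.2 hct.le) ?_ M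
  rw [hB.inv.eq]
  exact hA.norm_inv_add_smul_one_mulVec_le hc hct

end Matrix

theorem frobNorm_second_order_frechet_le_general {n : ℕ} (μ : Measure ℝ)
    (hsupp : μ (Set.Iio 0) = 0) (A : Matrix (Fin n) (Fin n) ℂ) (hA : A.PosDef)
    (lam : ℝ) (hlam : IsLeast (Set.range hA.isHermitian.eigenvalues) lam)
    (hint : Integrable (fun t : ℝ => ((lam + t) ^ 3)⁻¹) μ)
    (E Z : Matrix (Fin n) (Fin n) ℂ) (hE : ‖E‖ = 1) (hZ : ‖Z‖ = 1) :
    ‖∫ t : ℝ,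
        ((A + (t : ℂ) • 1)⁻¹ * E * (A + (t : ℂ) • 1)⁻¹ * Z * (A + (t : ℂ) • 1)⁻¹ +
          (A + (t : ℂ) • 1)⁻¹ * Z * (A + (t : ℂ) • 1)⁻¹ * E * (A + (t : ℂ) • 1)⁻¹) ∂μ‖ ≤
      2 * ∫ t : ℝ, ((lam + t) ^ 3)⁻¹ ∂μ := by
  obtain ⟨i, hi⟩ := hlam.1
  have hlam_pos : 0 < lam := hi ▸ hA.eigenvalues_pos i
  have hle : ∀ j, lam ≤ hA.isHermitian.eigenvalues j := fun j => hlam.2 ⟨j, rfl⟩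
  have hbound : ∀ t : ℝ, 0 ≤ t →
      ‖(A + (t : ℂ) • 1)⁻¹ * E * (A + (t : ℂ) • 1)⁻¹ * Z * (A + (t : ℂ) • 1)⁻¹ +
        (A + (t : ℂ) • 1)⁻¹ * Z * (A + (t : ℂ) • 1)⁻¹ * E * (A + (t : ℂ) • 1)⁻¹‖ ≤
        2 * ((lam + t) ^ 3)⁻¹ := by
    intro t ht
    have hct : 0 < lam + t := by positivity
    have hterm := norm_mul_mul_mul_mul_le (inv_nonneg.2 hct.le)
      (hA.isHermitian.frobenius_norm_inv_add_smul_one_mul_le hle hct)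
      (hA.isHermitian.frobenius_norm_mul_inv_add_smul_one_le hle hct)
    calc _ ≤ _ := norm_add_le _ _
      _ ≤ (lam + t)⁻¹ ^ 3 * (‖E‖ * ‖Z‖) + (lam + t)⁻¹ ^ 3 * (‖Z‖ * ‖E‖) :=
          add_le_add (hterm E Z) (hterm Z E)
      _ = 2 * ((lam + t) ^ 3)⁻¹ := by rw [hE, hZ, inv_pow]; ring
  have hnonneg : ∀ᵐ t ∂μ, 0 ≤ t :=
    (measure_eq_zero_iff_ae_notMem.1 hsupp).mono fun _ ht => not_lt.1 ht
  calc _ ≤ ∫ t : ℝ, 2 * ((lam + t) ^ 3)⁻¹ ∂μ :=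
        norm_integral_le_of_norm_le (hint.const_mul 2) (hnonneg.mono hbound)
    _ = 2 * ∫ t : ℝ, ((lam + t) ^ 3)⁻¹ ∂μ := integral_const_mul _ _

/-- For a Stieltjes function `f`, Hermitian positive definite `A` with smallest eigenvalue
`λ_min`, and unit Frobenius norm matrices `E, Z`, the Frobenius norm of the second-order
Fréchet derivative `L_f^{(2)}(A,E,Z) = ∫₀^∞ (R_t E R_t Z R_t + R_t Z R_t E R_t) dμ(t)`,
with `R_t = (A+tI)⁻¹`, is bounded above by `2 ∫₀^∞ dμ(t)/(λ_min+t)³`. -/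
theorem frobNorm_second_order_frechet_le {n : ℕ} (μ : Measure ℝ)
    (hsupp : μ (Set.Iio 0) = 0) (A : Matrix (Fin n) (Fin n) ℂ) (hA : A.PosDef)
    (lam : ℝ) (hlam : IsLeast (Set.range hA.isHermitian.eigenvalues) lam)
    (hint : Integrable (fun t : ℝ => ((lam + t) ^ 3)⁻¹) μ)
    (E Z : Matrix (Fin n) (Fin n) ℂ) (hE : ‖E‖ = 1) (hZ : ‖Z‖ = 1)
    (hintM : @Integrable _ _ SeminormedAddGroup.toContinuousENorm _ _ (fun t : ℝ =>
      (A + (t : ℂ) • 1)⁻¹ * E * (A + (t : ℂ) • 1)⁻¹ * Z * (A + (t : ℂ) • 1)⁻¹ +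
        (A + (t : ℂ) • 1)⁻¹ * Z * (A + (t : ℂ) • 1)⁻¹ * E * (A + (t : ℂ) • 1)⁻¹) μ) :
    ‖∫ t : ℝ,
        ((A + (t : ℂ) • 1)⁻¹ * E * (A + (t : ℂ) • 1)⁻¹ * Z * (A + (t : ℂ) • 1)⁻¹ +
          (A + (t : ℂ) • 1)⁻¹ * Z * (A + (t : ℂ) • 1)⁻¹ * E * (A + (t : ℂ) • 1)⁻¹) ∂μ‖ ≤
      2 * ∫ t : ℝ, ((lam + t) ^ 3)⁻¹ ∂μ :=
  frobNorm_second_order_frechet_le_general μ hsupp A hA lam hlam hint E Z hE hZ
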